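/- arXiv:1907.08050 — 5 statements merged into one kernel-verified Lean document; each statement's English description precedes it below -/
import Mathlib

section
/- Let (Ш, →, ↠, ↪) be a two-acyclic factorization system and let x ∈ Ш. Then ^⊥F(x) is the maximum element in the set of closed subsets T of Ш satisfying T(x) ∩ T = T_*(x). -/
namespace SDL

variable {S : Type*} {L : Type*}

/-- `X^⊥ = {y | x ↛ y for all x ∈ X}` -/
def perpR (r : S → S → Prop) (X : Set S) : Set S := {y | ∀ x ∈ X, ¬ r x y}

/-- `^⊥Y = {x | x ↛ y for all y ∈ Y}` -/
def perpL (r : S → S → Prop) (Y : Set S) : Set S := {x | ∀ y ∈ Y, ¬ r x y}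

/-- `(X, Y)` is a maximal orthogonal pair for `r`. -/
def IsMOP (r : S → S → Prop) (X Y : Set S) : Prop := Y = perpR r X ∧ X = perpL r Y

/-- The set of maximal orthogonal pairs. -/
def Pairs (r : S → S → Prop) : Type _ := {p : Set S × Set S // IsMOP r p.1 p.2}

/-- `Pairs r` is ordered by containment in the first component. -/
instance (r : S → S → Prop) : PartialOrder (Pairs r) where
  le p q := p.val.1 ⊆ q.val.1
  le_refl _ := Set.Subset.rfl
  le_trans _ _ _ h h' := Set.Subset.trans h h'
  le_antisymm p q h h' := by
    apply Subtype.ext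
    have h1 : p.val.1 = q.val.1 := subset_antisymm h h'
    have h2 : p.val.2 = q.val.2 := by rw [p.prop.1, q.prop.1, h1]
    exact Prod.ext h1 h2

/-- `x ↠ y` iff for all `z`, `y → z` implies `x → z`. -/
def Onto (r : S → S → Prop) (x y : S) : Prop := ∀ z, r y z → r x z

/-- `x ↪ y` iff for all `z`, `z → x` implies `z → y`. -/
def Into (r : S → S → Prop) (x y : S) : Prop := ∀ z, r z x → r z y

/-- `Mult ↠ ↪` relates `x` to `z` iff `x ↠ y ↪ z` for some `y`. -/
def Mult (ont inj : S → S → Prop) (x z : S) : Prop := ∃ y, ont x y ∧ inj y z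

/-- `(S, r, ont, inj)` is a factorization system. -/
structure IsFactSystem (r ont inj : S → S → Prop) : Prop where
  refl : ∀ x, r x x
  onto_iff : ∀ x y, ont x y ↔ Onto r x y
  into_iff : ∀ x y, inj x y ↔ Into r x y
  mult_iff : ∀ x z, r x z ↔ Mult ont inj x z

/-- A two-acyclic factorization system. -/
structure IsTwoAcyclicFS (r ont inj : S → S → Prop) extends IsFactSystem r ont inj : Prop where
  onto_antisymm : ∀ x y, ont x y → ont y x → x = y
  into_antisymm : ∀ x y, inj x y → inj y x → x = y
  brick : ∀ x y, ont x y → inj y x → x = y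

/-- `T(x) = {x' | x ↠ x'}`. -/
def Tset (ont : S → S → Prop) (x : S) : Set S := {x' | ont x x'}

/-- `F(x) = {x' | x' ↪ x}`. -/
def Fset (inj : S → S → Prop) (x : S) : Set S := {x' | inj x' x}

/-- Restriction of a relation to a subset. -/
def restrictRel (r : S → S → Prop) (D : Set S) : D → D → Prop := fun a b => r a b

/-- A subset is closed if it equals its closure `^⊥(X^⊥)`. -/
def IsClosedSet (r : S → S → Prop) (X : Set S) : Prop := perpL r (perpR r X) = X

/-- The lattice of closed sets, ordered by containment. -/
abbrev Closeds (r : S → S → Prop) : Type _ := {X : Set S // IsClosedSet r X}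

/-- `Del(X, c) = X \ {x ∈ X : x ↠ c}`. -/
def Del (ont : S → S → Prop) (X : Set S) (c : S) : Set S := X \ {x | ont x c}

/-- `Cov(X)`: those `c ∈ X` with `Del(X,c)` closed and the closure of `Del(X,c) ∪ {c}` equal
to `X`. -/
def CovS (r ont : S → S → Prop) (X : Set S) : Set S :=
  {c | c ∈ X ∧ IsClosedSet r (Del ont X c) ∧ perpL r (perpR r (Del ont X c ∪ {c})) = X}

/-- Direct forcing: `x ⇝ y` iff `x` is `↠`-minimal in `F(y)` or `↪`-maximal in `T(y)`. -/
def Forces (ont inj : S → S → Prop) (x y : S) : Prop :=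
  (inj x y ∧ ∀ x', inj x' y → ont x x' → x' = x) ∨
  (ont y x ∧ ∀ x', ont y x' → inj x' x → x' = x)

/-- `down X` for a partial order given as a relation (`r x y` meaning `x ≥ y`). -/
def dnRel (r : S → S → Prop) (X : Set S) : Set S := {y | ∃ x ∈ X, r x y}

/-- `up X` for a partial order given as a relation (`r x y` meaning `x ≥ y`). -/
def upRel (r : S → S → Prop) (X : Set S) : Set S := {y | ∃ x ∈ X, r y x}

section OrderNotions

variable [PartialOrder L]

/-- Completely join-irreducible: there is `j⁎` such that `x < j ↔ x ≤ j⁎`. -/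
def CJIrr (j : L) : Prop := ∃ j', ∀ x : L, x < j ↔ x ≤ j'

/-- Completely meet-irreducible: there is `j^*` such that `x > m ↔ x ≥ m^*`. -/
def CMIrr (m : L) : Prop := ∃ m', ∀ x : L, m < x ↔ m' ≤ x

/-- `k = κ(j)`: `k` is the greatest element of `{y | j ⊓ y = j⁎}`. -/
def IsKappa (j k : L) : Prop :=
  ∃ j', (∀ x : L, x < j ↔ x ≤ j') ∧ IsGreatest {y : L | IsGLB ({j, y} : Set L) j'} k

/-- `k = κᵈ(m)`: `k` is the least element of `{x | m ⊔ x = m^*}`. -/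
def IsKappad (m k : L) : Prop :=
  ∃ m', (∀ x : L, m < x ↔ m' ≤ x) ∧ IsLeast {x : L | IsLUB ({m, x} : Set L) m'} k

/-- `L` is a κ-lattice: complete, meet and join generated by irreducibles, with inverse
bijections `κ` and `κᵈ` between the completely join- and meet-irreducibles. -/
def IsKappaLattice (L : Type*) [PartialOrder L] : Prop :=
  (∀ s : Set L, ∃ a, IsLUB s a) ∧
  (∀ s : Set L, ∃ a, IsGLB s a) ∧
  (∀ x : L, IsLUB {j : L | CJIrr j ∧ j ≤ x} x) ∧
  (∀ x : L, IsGLB {m : L | CMIrr m ∧ x ≤ m} x) ∧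
  (∀ j : L, CJIrr j → ∃ k, IsKappa j k ∧ CMIrr k ∧ IsKappad k j) ∧
  (∀ m : L, CMIrr m → ∃ k, IsKappad m k ∧ CJIrr k ∧ IsKappa k m)

/-- Well separated: `z₁ ≰ z₂` implies some completely join-irreducible `j` has `j ≤ z₁` and
`κ(j) ≥ z₂`. -/
def WellSeparated (L : Type*) [PartialOrder L] : Prop :=
  ∀ z₁ z₂ : L, ¬ z₁ ≤ z₂ → ∃ j k : L, CJIrr j ∧ IsKappa j k ∧ j ≤ z₁ ∧ z₂ ≤ k

/-- The set of completely join-irreducible elements, as a type. -/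
abbrev JIrrC (L : Type*) [PartialOrder L] : Type _ := {j : L // CJIrr j}

/-- `i →_L j` iff `i ≰ κ(j)`. -/
def toL (i j : JIrrC L) : Prop := ∃ k : L, IsKappa (j : L) k ∧ ¬ (i : L) ≤ k

/-- `i ↠_L j` iff `i ≥ j` in `L`. -/
def ontoL (i j : JIrrC L) : Prop := (j : L) ≤ (i : L)

/-- `i ↪_L j` iff `κ(i) ≥ κ(j)` in `L`. -/
def intoL (i j : JIrrC L) : Prop :=
  ∃ ki kj : L, IsKappa (i : L) ki ∧ IsKappa (j : L) kj ∧ kj ≤ ki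

/-- A poset is a semidistributive lattice (order-theoretically): binary joins and meets exist,
and both semidistributive laws hold. -/
def IsSDLattice (L : Type*) [PartialOrder L] : Prop :=
  (∀ x y : L, ∃ s, IsLUB ({x, y} : Set L) s) ∧
  (∀ x y : L, ∃ s, IsGLB ({x, y} : Set L) s) ∧
  (∀ x y z sxy sxz myz : L, IsLUB ({x, y} : Set L) sxy → IsLUB ({x, z} : Set L) sxz →
    sxy = sxz → IsGLB ({y, z} : Set L) myz → IsLUB ({x, myz} : Set L) sxy) ∧
  (∀ x y z mxy mxz syz : L, IsGLB ({x, y} : Set L) mxy → IsGLB ({x, z} : Set L) mxz →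
    mxy = mxz → IsLUB ({y, z} : Set L) syz → IsGLB ({x, syz} : Set L) mxy)

/-- `s` is the canonical join representation of `x`. -/
def IsCanonicalJoinRep (s : Set L) (x : L) : Prop :=
  IsLUB s x ∧ (∀ s' : Set L, IsLUB s' x → ∀ a ∈ s, ∃ b ∈ s', a ≤ b) ∧
  IsAntichain (· ≤ ·) s

end OrderNotions

/-- Join semidistributivity. -/
def JoinSD (L : Type*) [Lattice L] : Prop :=
  ∀ x y z : L, x ⊔ y = x ⊔ z → x ⊔ (y ⊓ z) = x ⊔ y

/-- Meet semidistributivity. -/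
def MeetSD (L : Type*) [Lattice L] : Prop :=
  ∀ x y z : L, x ⊓ y = x ⊓ z → x ⊓ (y ⊔ z) = x ⊓ y

/-- Complete join semidistributivity. -/
def CompletelyJoinSD (L : Type*) [CompleteLattice L] : Prop :=
  ∀ (X : Set L) (y z : L), X.Nonempty → (∀ x ∈ X, x ⊔ y = z) → sInf X ⊔ y = z

/-- Complete meet semidistributivity. -/
def CompletelyMeetSD (L : Type*) [CompleteLattice L] : Prop :=
  ∀ (X : Set L) (y z : L), X.Nonempty → (∀ x ∈ X, x ⊓ y = z) → sSup X ⊓ y = z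

end SDL

namespace SDL

/-! Since `z → y ↪ x` implies `z → x`, we have `^⊥F(x) = ^⊥{x}`. Two-acyclicity puts `T⁎(x)`
inside `^⊥{x}`. Conversely, a closed `T ⊇ T⁎(x)` containing some `z → x` contains `x`: every
`x → w` factors as `x ↠ u ↪ w`, so either `u ∈ T⁎(x)` and `u → w`, or `u = x` and `z → w`. -/

variable {S : Type*}

theorem perpL_isClosed (r : S → S → Prop) (Y : Set S) : IsClosedSet r (perpL r Y) :=
  subset_antisymm (fun _ hz y hy => hz y fun _ ht => ht y hy) fun _ hz _ hw => hw _ hz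

theorem IsClosedSet.mem_of_forall_rel {r : S → S → Prop} {T : Set S} (hT : IsClosedSet r T)
    {a : S} (ha : ∀ w, r a w → ∃ t ∈ T, r t w) : a ∈ T := by
  rw [← hT]
  intro w hw haw
  obtain ⟨t, ht, htw⟩ := ha w haw
  exact hw t ht htw

theorem inter_eq_diff_singleton_iff {A T : Set S} {a : S} (ha : a ∈ A) :
    A ∩ T = A \ {a} ↔ a ∉ T ∧ A \ {a} ⊆ T := by
  constructor
  · intro h
    refine ⟨fun haT => ?_, fun b hb => ((h ▸ hb : b ∈ A ∩ T)).2⟩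
    have : a ∈ A \ {a} := h ▸ ⟨ha, haT⟩
    exact this.2 rfl
  · rintro ⟨haT, hsub⟩
    ext b
    refine ⟨fun hb => ⟨hb.1, ?_⟩, fun hb => ⟨hb.1, hsub hb⟩⟩
    rintro rfl
    exact haT hb.2

namespace IsFactSystem

variable {r ont inj : S → S → Prop}

theorem onto_refl (h : IsFactSystem r ont inj) (a : S) : ont a a :=
  (h.onto_iff a a).2 fun _ => id

theorem into_refl (h : IsFactSystem r ont inj) (a : S) : inj a a :=
  (h.into_iff a a).2 fun _ => id

theorem onto_trans (h : IsFactSystem r ont inj) {a b c : S} (hab : ont a b) (hbc : ont b c) :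
    ont a c :=
  (h.onto_iff a c).2 fun z hcz => (h.onto_iff a b).1 hab z ((h.onto_iff b c).1 hbc z hcz)

theorem rel_of_rel_of_into (h : IsFactSystem r ont inj) {a b c : S} (hab : r a b)
    (hbc : inj b c) : r a c :=
  (h.into_iff b c).1 hbc a hab

theorem rel_of_into (h : IsFactSystem r ont inj) {a b : S} (hab : inj a b) : r a b :=
  h.rel_of_rel_of_into (h.refl a) hab

theorem perpL_Fset (h : IsFactSystem r ont inj) (x : S) :
    perpL r (Fset inj x) = perpL r {x} := by
  ext z
  refine ⟨fun hz y hy => hz y (hy ▸ h.into_refl x), fun hz y hy hzy => ?_⟩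
  exact hz x rfl (h.rel_of_rel_of_into hzy hy)

theorem mem_of_rel_of_Tset_diff_subset (h : IsFactSystem r ont inj) {T : Set S}
    (hT : IsClosedSet r T) {x : S} (hsub : Tset ont x \ {x} ⊆ T) {z : S} (hzT : z ∈ T)
    (hzx : r z x) : x ∈ T := by
  refine hT.mem_of_forall_rel fun w hxw => ?_
  obtain ⟨u, hxu, huw⟩ := (h.mult_iff x w).1 hxw
  by_cases hux : u = x
  · subst hux
    exact ⟨z, hzT, h.rel_of_rel_of_into hzx huw⟩
  · exact ⟨u, hsub ⟨hxu, hux⟩, h.rel_of_into huw⟩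

theorem subset_perpL_singleton (h : IsFactSystem r ont inj) {T : Set S}
    (hT : IsClosedSet r T) {x : S} (hx : x ∉ T) (hsub : Tset ont x \ {x} ⊆ T) :
    T ⊆ perpL r {x} := by
  rintro z hzT _ rfl hzx
  exact hx (h.mem_of_rel_of_Tset_diff_subset hT hsub hzT hzx)

end IsFactSystem

namespace IsTwoAcyclicFS

variable {r ont inj : S → S → Prop}

theorem eq_of_onto_of_rel (h : IsTwoAcyclicFS r ont inj) {x z : S} (hxz : ont x z)
    (hzx : r z x) : z = x := by
  obtain ⟨w, hzw, hwx⟩ := (h.mult_iff z x).1 hzx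
  obtain rfl : x = w := h.brick x w (h.onto_trans hxz hzw) hwx
  exact h.onto_antisymm z x hzw hxz

theorem Tset_diff_subset_perpL_singleton (h : IsTwoAcyclicFS r ont inj) (x : S) :
    Tset ont x \ {x} ⊆ perpL r {x} := by
  rintro z ⟨hxz, hzx⟩ _ rfl hr
  exact hzx (h.eq_of_onto_of_rel hxz hr)

end IsTwoAcyclicFS

/-- Proposition 2.11: `^⊥F(x)` is the maximum element of the set of closed sets `T`
with `T(x) ∩ T = T⁎(x)`. -/
theorem perpL_Fset_greatest (S : Type u) (r ont inj : S → S → Prop)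
    (h : IsTwoAcyclicFS r ont inj) (x : S) :
    IsGreatest {T : Set S | IsClosedSet r T ∧ Tset ont x ∩ T = Tset ont x \ {x}}
      (perpL r (Fset inj x)) := by
  have hx : x ∈ Tset ont x := h.onto_refl x
  rw [h.perpL_Fset x]
  refine ⟨⟨perpL_isClosed r {x}, (inter_eq_diff_singleton_iff hx).2 ⟨?_, ?_⟩⟩, ?_⟩
  · exact fun hxx => hxx x rfl (h.refl x)
  · exact h.Tset_diff_subset_perpL_singleton x
  · rintro T ⟨hT, hTx⟩
    obtain ⟨hxT, hsub⟩ := (inter_eq_diff_singleton_iff hx).1 hTx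
    exact h.subset_perpL_singleton hT hxT hsub

end SDL
end

section
/- Suppose L is a finite lattice. Then: (1) L is meet semidistributive if and only if for every join-irreducible element j of L, the set {x ∈ L : j ∧ x = j_*} has a maximum element κ(j); (2) L is join semidistributive if and only if for every meet-irreducible element m of L, the set {x ∈ L : m ∨ x = m^*} has a minimum element κᵈ(m); (3) if L is semidistributive, then κ is a bijection from JIrr(L) to MIrr(L) with inverse κᵈ. -/
/-!
Under meet semidistributivity the set `{y | j ⊓ y = j⁎}` is closed under joins, so in a finite
lattice it has a greatest element. Conversely, if `x ⊓ y = x ⊓ z < x ⊓ (y ⊔ z)`, a minimal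
`j ≤ x ⊓ (y ⊔ z)` with `j ≰ x ⊓ y` is join-irreducible and `j ⊓ y = j⁎ = j ⊓ z`, so `y ⊔ z ≤ κ(j)`,
which is absurd since `j ≤ y ⊔ z`. For the bijection, `κ(j)` is meet-irreducible with upper
cover `κ(j) ⊔ j`, and join semidistributivity makes `j` the least solution of
`κ(j) ⊔ x = κ(j) ⊔ j`. Everything for joins follows by passing to the order dual.
-/

lemma SupClosed.exists_isGreatest {α : Type*} [SemilatticeSup α] {s : Set α}
    (hs : SupClosed s) (hfin : s.Finite) (hne : s.Nonempty) : ∃ k, IsGreatest s k :=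
  ⟨hfin.toFinset.sup' (by simpa using hne) id,
    hs.finsetSup'_mem _ fun _ hi => hfin.mem_toFinset.mp hi,
    fun _ hy => Finset.le_sup' id (hfin.mem_toFinset.mpr hy)⟩

namespace SDL

section Lattice

variable {L : Type*} [Lattice L]

lemma MeetSD.supClosed_setOf_inf_eq (h : MeetSD L) (a b : L) : SupClosed {y | a ⊓ y = b} :=
  fun _ hy _ hz => (h a _ _ (hy.trans hz.symm)).trans hy

lemma MeetSD.exists_isGreatest_inf_eq [Finite L] (h : MeetSD L) {j j' : L} (hj : j' ≤ j) :
    ∃ k, IsGreatest {y | j ⊓ y = j'} k :=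
  (h.supClosed_setOf_inf_eq j j').exists_isGreatest (Set.toFinite _)
    ⟨j', inf_eq_right.mpr hj⟩

lemma exists_le_forall_lt_iff_le_inf [WellFoundedLT L] {a b : L} (hab : ¬ a ≤ b) :
    ∃ j ≤ a, ∀ x, x < j ↔ x ≤ j ⊓ b := by
  obtain ⟨j, ⟨hja, hjb⟩, hmin⟩ :=
    wellFounded_lt.has_min {w | w ≤ a ∧ ¬ w ≤ b} ⟨a, le_rfl, hab⟩
  have hlt : j ⊓ b < j := inf_le_left.lt_of_ne fun h => hjb (inf_eq_left.mp h)
  refine ⟨j, hja, fun x => ⟨fun hx => le_inf hx.le ?_, hlt.trans_le'⟩⟩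
  by_contra hxb
  exact hmin x ⟨hx.le.trans hja, hxb⟩ hx

lemma meetSD_of_exists_isGreatest [WellFoundedLT L]
    (H : ∀ j j' : L, (∀ x : L, x < j ↔ x ≤ j') →
      ∃ k, IsGreatest {y : L | j ⊓ y = j'} k) :
    MeetSD L := by
  intro x y z hxyz
  by_contra hne
  have hle : x ⊓ y ≤ x ⊓ (y ⊔ z) := inf_le_inf_left x le_sup_left
  obtain ⟨j, hj, hcov⟩ :=
    exists_le_forall_lt_iff_le_inf (a := x ⊓ (y ⊔ z)) fun h => hne (le_antisymm h hle)
  obtain ⟨k, hk_mem, hk⟩ := H j _ hcov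
  have hjx : j ≤ x := hj.trans inf_le_left
  have hjy : j ⊓ y = j ⊓ (x ⊓ y) := by rw [← inf_assoc, inf_eq_left.mpr hjx]
  have hjz : j ⊓ z = j ⊓ (x ⊓ y) := by rw [hxyz, ← inf_assoc, inf_eq_left.mpr hjx]
  have hjk : j ≤ k := (hj.trans inf_le_right).trans (sup_le (hk hjy) (hk hjz))
  have hj_eq : j = j ⊓ (x ⊓ y) := (inf_eq_left.mpr hjk).symm.trans hk_mem
  exact lt_irrefl j ((hcov j).mpr hj_eq.le)

lemma meetSD_iff_exists_isGreatest [Finite L] :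
    MeetSD L ↔
      ∀ j j' : L, (∀ x : L, x < j ↔ x ≤ j') → ∃ k, IsGreatest {y : L | j ⊓ y = j'} k :=
  ⟨fun h _ _ hcov => h.exists_isGreatest_inf_eq ((hcov _).mpr le_rfl).le,
    meetSD_of_exists_isGreatest⟩

lemma joinSD_iff_exists_isLeast [Finite L] :
    JoinSD L ↔
      ∀ m m' : L, (∀ x : L, m < x ↔ m' ≤ x) → ∃ k, IsLeast {x : L | m ⊔ x = m'} k :=
  meetSD_iff_exists_isGreatest (L := Lᵒᵈ)

section Kappa

variable {j j' m : L} (hcov : ∀ x : L, x < j ↔ x ≤ j')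
include hcov

lemma not_le_of_inf_eq (hjm : j ⊓ m = j') : ¬ j ≤ m := fun h =>
  lt_irrefl j ((hcov j).mpr (by rw [← hjm, inf_eq_left.mpr h]))

lemma lt_iff_sup_le_of_isGreatest_inf_eq (hm : IsGreatest {y | j ⊓ y = j'} m) :
    ∀ x, m < x ↔ m ⊔ j ≤ x := by
  have hjm : j ⊓ m = j' := hm.1
  intro x
  refine ⟨fun hx => sup_le hx.le ?_, fun hx => ?_⟩
  · by_contra hjx
    have hlt : j ⊓ x < j := inf_le_left.lt_of_ne fun e => hjx (inf_eq_left.mp e)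
    have hj'x : j' ≤ x := hjm ▸ inf_le_right.trans hx.le
    have hjx' : j ⊓ x = j' := le_antisymm ((hcov _).mp hlt) (le_inf ((hcov j').mpr le_rfl).le hj'x)
    exact hx.not_ge (hm.2 hjx')
  · exact (le_sup_left.trans hx).lt_of_ne fun e =>
      not_le_of_inf_eq hcov hjm (e ▸ le_sup_right.trans hx)

lemma JoinSD.isLeast_sup_eq (h : JoinSD L) (hjm : j ⊓ m = j') :
    IsLeast {x | m ⊔ x = m ⊔ j} j := by
  refine ⟨rfl, fun w hw => ?_⟩
  by_contra hjw
  have hlt : w ⊓ j < j := inf_le_right.lt_of_ne fun e => hjw (inf_eq_right.mp e)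
  have hm : m ⊔ (w ⊓ j) = m := sup_eq_left.mpr (((hcov _).mp hlt).trans (hjm ▸ inf_le_right))
  have hmw : m ⊔ (w ⊓ j) = m ⊔ w := h m w j hw
  exact not_le_of_inf_eq hcov hjm (le_sup_right.trans (hw.symm.trans (hmw.symm.trans hm)).le)

lemma exists_isGreatest_inf_eq_isLeast_sup_eq [Finite L] (hM : MeetSD L) (hJ : JoinSD L) :
    ∃ m m' : L, IsGreatest {y : L | j ⊓ y = j'} m ∧ (∀ x : L, m < x ↔ m' ≤ x) ∧
      IsLeast {x : L | m ⊔ x = m'} j := by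
  obtain ⟨m, hm⟩ := hM.exists_isGreatest_inf_eq ((hcov j').mpr le_rfl).le
  exact ⟨m, m ⊔ j, hm, lt_iff_sup_le_of_isGreatest_inf_eq hcov hm, hJ.isLeast_sup_eq hcov hm.1⟩

end Kappa

lemma exists_isLeast_sup_eq_isGreatest_inf_eq [Finite L] (hM : MeetSD L) (hJ : JoinSD L)
    {m m' : L} (hcov : ∀ x : L, m < x ↔ m' ≤ x) :
    ∃ j j' : L, IsLeast {x : L | m ⊔ x = m'} j ∧ (∀ x : L, x < j ↔ x ≤ j') ∧
      IsGreatest {y : L | j ⊓ y = j'} m :=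
  exists_isGreatest_inf_eq_isLeast_sup_eq (L := Lᵒᵈ) hcov hJ hM

end Lattice

/-- Theorem 2.16: a finite lattice is meet (resp. join) semidistributive iff `κ` (resp. `κᵈ`)
exists, and if semidistributive, `κ` and `κᵈ` are inverse bijections between the
join-irreducible and meet-irreducible elements. -/
theorem semidistrib_char (L : Type u) [Lattice L] [Fintype L] :
    (MeetSD L ↔
      ∀ j j' : L, (∀ x : L, x < j ↔ x ≤ j') → ∃ k, IsGreatest {y : L | j ⊓ y = j'} k) ∧
    (JoinSD L ↔
      ∀ m m' : L, (∀ x : L, m < x ↔ m' ≤ x) → ∃ k, IsLeast {x : L | m ⊔ x = m'} k) ∧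
    (MeetSD L → JoinSD L →
      (∀ j j' : L, (∀ x : L, x < j ↔ x ≤ j') →
        ∃ m m' : L, IsGreatest {y : L | j ⊓ y = j'} m ∧ (∀ x : L, m < x ↔ m' ≤ x) ∧
          IsLeast {x : L | m ⊔ x = m'} j) ∧
      (∀ m m' : L, (∀ x : L, m < x ↔ m' ≤ x) →
        ∃ j j' : L, IsLeast {x : L | m ⊔ x = m'} j ∧ (∀ x : L, x < j ↔ x ≤ j') ∧
          IsGreatest {y : L | j ⊓ y = j'} m)) :=
  ⟨meetSD_iff_exists_isGreatest, joinSD_iff_exists_isLeast, fun hM hJ =>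
    ⟨fun _ _ hcov => exists_isGreatest_inf_eq_isLeast_sup_eq hcov hM hJ,
      fun _ _ hcov => exists_isLeast_sup_eq_isGreatest_inf_eq hM hJ hcov⟩⟩

end SDL
end

section
/- If L is a completely semidistributive lattice and u ⋖ v is a cover relation in L, then the set {t ∈ L : t ∨ u = v} contains a minimum element ℓ, and this ℓ is completely join-irreducible with ℓ_* ≤ u. -/
/-- For `x < l`, minimality of `l` forces `x ⊔ u ≠ v`, so `x ⊔ u = u` by the cover. -/
theorem CovBy.lt_iff_le_inf_of_isLeast {L : Type*} [Lattice L] {u v l : L} (huv : u ⋖ v)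
    (hl : IsLeast {t | t ⊔ u = v} l) (x : L) : x < l ↔ x ≤ l ⊓ u := by
  have hlu : ¬ l ≤ u := fun h => huv.ne (sup_eq_right.2 h ▸ hl.1)
  constructor
  · intro hx
    have hxuv : x ⊔ u ≤ v := hl.1 ▸ sup_le_sup_right hx.le u
    rcases huv.eq_or_eq le_sup_right hxuv with h | h
    · exact le_inf hx.le (le_sup_left.trans h.le)
    · exact absurd (hl.2 h) hx.not_ge
  · intro hx
    exact hx.trans_lt (inf_le_left.lt_of_not_ge fun h => hlu (h.trans inf_le_right))

namespace SDL

theorem CompletelyJoinSD.isLeast_sInf_sup_eq {L : Type*} [CompleteLattice L] (h : CompletelyJoinSD L)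
    {y z : L} (hne : {t : L | t ⊔ y = z}.Nonempty) :
    IsLeast {t : L | t ⊔ y = z} (sInf {t : L | t ⊔ y = z}) :=
  ⟨h _ y z hne fun _ hx => hx, fun _ hx => sInf_le hx⟩

theorem ji_labelling_general (L : Type u) [CompleteLattice L]
    (h1 : CompletelyJoinSD L)
    (u v : L) (huv : u ⋖ v) :
    ∃ l : L, IsLeast {t : L | t ⊔ u = v} l ∧
      ∃ l' : L, (∀ x : L, x < l ↔ x ≤ l') ∧ l' ≤ u := by
  have hl := CompletelyJoinSD.isLeast_sInf_sup_eq h1 ⟨v, sup_eq_left.2 huv.le⟩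
  exact ⟨_, hl, _, huv.lt_iff_le_inf_of_isLeast hl, inf_le_right⟩

/-- Lemma 3.4 (join-irreducible labelling): in a completely semidistributive lattice,
for every cover `u ⋖ v` the set `{t | t ⊔ u = v}` has a minimum element `ℓ`, which is
completely join-irreducible with `ℓ⁎ ≤ u`. -/
theorem ji_labelling (L : Type u) [CompleteLattice L]
    (h1 : CompletelyJoinSD L) (h2 : CompletelyMeetSD L)
    (u v : L) (huv : u ⋖ v) :
    ∃ l : L, IsLeast {t : L | t ⊔ u = v} l ∧
      ∃ l' : L, (∀ x : L, x < l ↔ x ≤ l') ∧ l' ≤ u :=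
  ji_labelling_general L h1 u v huv

end SDL
end

section
/- If L is a completely semidistributive, cover-separated lattice and x ∈ L, then x = ⋁{j ∈ JIrr^c(L) : j ≤ x} = ⋀{m ∈ MIrr^c(L) : m ≥ x}. -/
/-! A cover `a ⋖ b` is witnessed from below by `j = ⋀ {w | w ⊔ a = b}`: complete join
semidistributivity gives `j ⊔ a = b`, and every `w < j` has `w ⊔ a` strictly below `b`, hence
equal to `a`, so `j ⊓ a` is the unique lower cover of `j`. If the join `s` of the completely
join-irreducibles below `x` were strictly below `x`, cover separation would give a cover
`a ⋖ b` in `[s, x]`, and its witness `j ≤ b ≤ x` with `j ≰ a` contradicts `j ≤ s ≤ a`.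
The meet statement is the same argument in the order dual. -/

namespace SDL

open OrderDual

variable {L : Type*}

def CoverSeparated (L : Type*) [Preorder L] : Prop :=
  ∀ w z : L, w < z → ∃ x y : L, w ≤ x ∧ x ⋖ y ∧ y ≤ z

theorem CoverSeparated.orderDual [Preorder L] (h : CoverSeparated L) : CoverSeparated Lᵒᵈ := by
  intro w z hwz
  obtain ⟨x, y, hzx, hxy, hyw⟩ := h (ofDual z) (ofDual w) hwz
  exact ⟨toDual y, toDual x, hyw, hxy.toDual, hzx⟩

theorem CompletelyMeetSD.orderDual [CompleteLattice L] (h : CompletelyMeetSD L) :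
    CompletelyJoinSD Lᵒᵈ :=
  h

theorem CovBy.exists_cjIrr_le_not_le [CompleteLattice L] (hL : CompletelyJoinSD L) {a b : L}
    (hab : a ⋖ b) : ∃ j, CJIrr j ∧ j ≤ b ∧ ¬ j ≤ a := by
  set X : Set L := {w | w ⊔ a = b}
  have hjb : sInf X ⊔ a = b := hL X a b ⟨b, sup_eq_left.mpr hab.le⟩ fun _ hw => hw
  have hja : ¬ sInf X ≤ a := fun h => hab.lt.ne (sup_eq_right.mpr h ▸ hjb)
  have below : ∀ w, w < sInf X → w ≤ sInf X ⊓ a := fun w hw => by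
    rcases hab.eq_or_eq le_sup_right ((sup_le_sup_right hw.le a).trans hjb.le) with h | h
    · exact le_inf hw.le (sup_eq_right.mp h)
    · exact absurd (sInf_le (show w ∈ X from h)) hw.not_ge
  refine ⟨sInf X, ⟨sInf X ⊓ a, fun w => ⟨below w, fun hw => ?_⟩⟩,
    le_sup_left.trans hjb.le, hja⟩
  exact hw.trans_lt (inf_lt_left.mpr hja)

theorem CoverSeparated.sSup_eq_of_covBy [CompleteLattice L] (hcs : CoverSeparated L)
    {P : L → Prop} (hP : ∀ a b : L, a ⋖ b → ∃ j, P j ∧ j ≤ b ∧ ¬ j ≤ a) (x : L) :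
    sSup {j | P j ∧ j ≤ x} = x := by
  refine (sSup_le fun j hj => hj.2).eq_of_not_lt fun hlt => ?_
  obtain ⟨a, b, hsa, hab, hbx⟩ := hcs _ _ hlt
  obtain ⟨j, hj, hjb, hja⟩ := hP a b hab
  exact hja ((le_sSup (s := {j | P j ∧ j ≤ x}) ⟨hj, hjb.trans hbx⟩).trans hsa)

/-- Proposition 3.6: in a completely semidistributive, cover-separated lattice, every element
is the join of the completely join-irreducibles below it and the meet of the completely
meet-irreducibles above it. -/
theorem generated_by_irreducibles (L : Type u) [CompleteLattice L]
    (h1 : CompletelyJoinSD L) (h2 : CompletelyMeetSD L)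
    (hcs : ∀ w z : L, w < z → ∃ x y : L, w ≤ x ∧ x ⋖ y ∧ y ≤ z) (x : L) :
    x = sSup {j : L | CJIrr j ∧ j ≤ x} ∧ x = sInf {m : L | CMIrr m ∧ x ≤ m} := by
  have hcs : CoverSeparated L := hcs
  constructor
  · exact (hcs.sSup_eq_of_covBy (fun _ _ => CovBy.exists_cjIrr_le_not_le h1) x).symm
  -- `CJIrr` on `Lᵒᵈ` unfolds to `CMIrr` on `L`
  · exact (hcs.orderDual.sSup_eq_of_covBy
      (fun _ _ => CovBy.exists_cjIrr_le_not_le h2.orderDual) (toDual x)).symm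

end SDL
end

section
/- Suppose (Ш, →, ↠, ↪) is a two-acyclic factorization system and let [(X₁,Y₁),(X₂,Y₂)] be an interval in Pairs(→). Let →' be the restriction of → to X₂ ∩ Y₁ and let (↠', ↪') = Fact(→'). Then (X₂ ∩ Y₁, →', ↠', ↪') is a two-acyclic factorization system, and the map (U,V) ↦ (U ∩ Y₁, V ∩ X₂) is an order isomorphism from the interval [(X₁,Y₁),(X₂,Y₂)] to Pairs(→'). -/
/-!
Every arrow `x → z` with `x ∈ X₂` and `z ∈ Y₁` factors as `x ↠ w ↪ z`, and `w` lands in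
`D = X₂ ∩ Y₁` because `X₂` is closed under `↠` and `Y₁` under `↪`. Hence `D` inherits the
factorization of its arrows, which makes the restriction a factorization system; two-acyclicity
transfers because `x ↠' y` together with `y → x` forces the factorization of `y → x` through `D`
to be trivial, giving `y ↠ x` in the big system (and dually for `↪'`). For the interval, a pair
`(U, V)` is recovered from `(U ∩ D, V ∩ D)` since an arrow from `u ∈ U` to a point of `Y₁` factors
through a point of `U ∩ D`; conversely a pair `(A, B)` of the restriction comes from the pair generated by
`X₁ ∪ A`.
-/

namespace SDL

variable {S : Type*} {r ont inj : S → S → Prop}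

variable (r ont inj) in
def IsFactClosed (D : Set S) : Prop :=
  ∀ x ∈ D, ∀ z ∈ D, r x z → ∃ w ∈ D, ont x w ∧ inj w z

lemma perpR_anti {W W' : Set S} (h : W ⊆ W') : perpR r W' ⊆ perpR r W :=
  fun _ hb x hx => hb x (h hx)

lemma perpR_perpL_perpR (W : Set S) : perpR r (perpL r (perpR r W)) = perpR r W :=
  (perpR_anti fun _ hw _ hb => hb _ hw).antisymm fun _ hb _ ha => ha _ hb

namespace IsFactSystem

variable (h : IsFactSystem r ont inj)
include h

lemma rel_of_ont {x y : S} (hxy : ont x y) : r x y :=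
  (h.onto_iff x y).1 hxy y (h.refl y)

lemma rel_of_inj {x y : S} (hxy : inj x y) : r x y :=
  (h.into_iff x y).1 hxy x (h.refl x)

lemma ont_trans {x y z : S} (hxy : ont x y) (hyz : ont y z) : ont x z :=
  (h.onto_iff x z).2 fun c hc => (h.onto_iff x y).1 hxy c ((h.onto_iff y z).1 hyz c hc)

lemma inj_trans {x y z : S} (hxy : inj x y) (hyz : inj y z) : inj x z :=
  (h.into_iff x z).2 fun c hc => (h.into_iff y z).1 hyz c ((h.into_iff x y).1 hxy c hc)

lemma restrict {D : Set S} (hD : IsFactClosed r ont inj D) :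
    IsFactSystem (restrictRel r D) (Onto (restrictRel r D)) (Into (restrictRel r D)) where
  refl x := h.refl x
  onto_iff _ _ := Iff.rfl
  into_iff _ _ := Iff.rfl
  mult_iff x z := by
    refine ⟨fun hxz => ?_, fun ⟨y, hxy, hyz⟩ => hxy z (hyz y (h.refl y))⟩
    obtain ⟨w, hwD, hxw, hwz⟩ := hD x x.2 z z.2 hxz
    exact ⟨⟨w, hwD⟩, fun c => (h.onto_iff _ _).1 hxw c, fun c => (h.into_iff _ _).1 hwz c⟩

end IsFactSystem

namespace IsTwoAcyclicFS

variable (h : IsTwoAcyclicFS r ont inj)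
include h

lemma eq_of_rel_of_inj {x y : S} (hxy : r x y) (hyx : inj y x) : y = x := by
  obtain ⟨w, hxw, hwy⟩ := (h.mult_iff x y).1 hxy
  obtain rfl : x = w := h.brick x w hxw (h.inj_trans hwy hyx)
  exact (h.into_antisymm x y hwy hyx).symm

lemma eq_of_rel_of_ont {x y : S} (hyx : r y x) (hxy : ont x y) : y = x := by
  obtain ⟨w, hyw, hwx⟩ := (h.mult_iff y x).1 hyx
  obtain rfl : x = w := h.brick x w (h.ont_trans hxy hyw) hwx
  exact h.onto_antisymm y x hyw hxy

variable {D : Set S} (hD : IsFactClosed r ont inj D)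
include hD

lemma ont_of_onto_restrict {x y : D} (hxy : Onto (restrictRel r D) x y) (hyx : r y x) :
    ont y x := by
  obtain ⟨w, hwD, hyw, hwx⟩ := hD y y.2 x x.2 hyx
  obtain rfl : w = x := h.eq_of_rel_of_inj (hxy ⟨w, hwD⟩ (h.rel_of_ont hyw)) hwx
  exact hyw

lemma inj_of_into_restrict {x y : D} (hxy : Into (restrictRel r D) x y) (hyx : r y x) :
    inj y x := by
  obtain ⟨w, hwD, hyw, hwx⟩ := hD y y.2 x x.2 hyx
  obtain rfl : w = y := h.eq_of_rel_of_ont (hxy ⟨w, hwD⟩ (h.rel_of_inj hwx)) hyw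
  exact hwx

lemma restrict :
    IsTwoAcyclicFS (restrictRel r D) (Onto (restrictRel r D)) (Into (restrictRel r D)) where
  toIsFactSystem := h.toIsFactSystem.restrict hD
  onto_antisymm x y hxy hyx := Subtype.ext <| h.onto_antisymm x y
    (h.ont_of_onto_restrict hD hyx (hxy y (h.refl y)))
    (h.ont_of_onto_restrict hD hxy (hyx x (h.refl x)))
  into_antisymm x y hxy hyx := Subtype.ext <| h.into_antisymm x y
    (h.inj_of_into_restrict hD hyx (hxy x (h.refl x)))
    (h.inj_of_into_restrict hD hxy (hyx y (h.refl y)))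
  brick x y hxy hyx := Subtype.ext <| (h.brick y x
    (h.ont_of_onto_restrict hD hxy (hyx y (h.refl y)))
    (h.inj_of_into_restrict hD hyx (hxy y (h.refl y)))).symm

end IsTwoAcyclicFS

namespace Pairs

lemma not_rel (p : Pairs r) {x y : S} (hx : x ∈ p.val.1) (hy : y ∈ p.val.2) : ¬ r x y := by
  rw [p.prop.1] at hy
  exact hy x hx

lemma mem_fst_of_onto (p : Pairs r) {x y : S} (hx : x ∈ p.val.1) (hxy : Onto r x y) :
    y ∈ p.val.1 := by
  rw [p.prop.2]
  exact fun b hb hyb => p.not_rel hx hb (hxy b hyb)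

lemma mem_snd_of_into (p : Pairs r) {x y : S} (hy : y ∈ p.val.2) (hxy : Into r x y) :
    x ∈ p.val.2 := by
  rw [p.prop.1]
  exact fun a ha hax => p.not_rel ha hy (hxy a hax)

lemma ext_fst {p q : Pairs r} (h : p.val.1 = q.val.1) : p = q :=
  Subtype.ext (Prod.ext h (by rw [p.prop.1, q.prop.1, h]))

lemma snd_subset_of_le {p q : Pairs r} (hpq : p ≤ q) : q.val.2 ⊆ p.val.2 := by
  rw [q.prop.1, p.prop.1]
  exact perpR_anti hpq

variable (r) in
def ofSet (W : Set S) : Pairs r :=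
  ⟨(perpL r (perpR r W), perpR r W), (perpR_perpL_perpR W).symm, rfl⟩

lemma subset_ofSet_fst (W : Set S) : W ⊆ (ofSet r W).val.1 :=
  fun _ hw _ hb => hb _ hw

lemma le_ofSet {p : Pairs r} {W : Set S} (h : p.val.1 ⊆ W) : p ≤ ofSet r W :=
  h.trans (subset_ofSet_fst W)

lemma ofSet_le {p : Pairs r} {W : Set S} (h : W ⊆ p.val.1) : ofSet r W ≤ p := by
  intro x hx
  rw [p.prop.2]
  exact fun b hb => hx b fun w hw => p.not_rel (h hw) hb

end Pairs

section Interval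

variable (p₁ p₂ : Pairs r)

lemma exists_factor_mem_inter (h : IsFactSystem r ont inj) {x z : S} (hx : x ∈ p₂.val.1)
    (hz : z ∈ p₁.val.2) (hxz : r x z) :
    ∃ w ∈ p₂.val.1 ∩ p₁.val.2, ont x w ∧ inj w z := by
  obtain ⟨w, hxw, hwz⟩ := (h.mult_iff x z).1 hxz
  exact ⟨w, ⟨p₂.mem_fst_of_onto hx ((h.onto_iff x w).1 hxw),
    p₁.mem_snd_of_into hz ((h.into_iff w z).1 hwz)⟩, hxw, hwz⟩

lemma isFactClosed_inter (h : IsFactSystem r ont inj) :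
    IsFactClosed r ont inj (p₂.val.1 ∩ p₁.val.2) :=
  fun _ hx _ hz => exists_factor_mem_inter p₁ p₂ h hx.1 hz.2

variable {p₁ p₂}

lemma exists_mem_inter_fst_rel (h : IsFactSystem r ont inj) {q : Pairs r} (hq : q ≤ p₂)
    {x z : S} (hx : x ∈ q.val.1) (hz : z ∈ p₁.val.2) (hxz : r x z) :
    ∃ w ∈ p₂.val.1 ∩ p₁.val.2, w ∈ q.val.1 ∧ r w z := by
  obtain ⟨w, hwD, hxw, hwz⟩ := exists_factor_mem_inter p₁ p₂ h (hq hx) hz hxz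
  exact ⟨w, hwD, q.mem_fst_of_onto hx ((h.onto_iff x w).1 hxw), h.rel_of_inj hwz⟩

lemma exists_mem_inter_snd_rel (h : IsFactSystem r ont inj) {q : Pairs r} (hq : p₁ ≤ q)
    {x z : S} (hx : x ∈ p₂.val.1) (hz : z ∈ q.val.2) (hxz : r x z) :
    ∃ w ∈ p₂.val.1 ∩ p₁.val.2, w ∈ q.val.2 ∧ r x w := by
  obtain ⟨w, hwD, hxw, hwz⟩ :=
    exists_factor_mem_inter p₁ p₂ h hx (Pairs.snd_subset_of_le hq hz) hxz
  exact ⟨w, hwD, q.mem_snd_of_into hz ((h.into_iff w z).1 hwz), h.rel_of_ont hxw⟩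

lemma isMOP_restrict (h : IsFactSystem r ont inj) {q : Pairs r} (h₁ : p₁ ≤ q) (h₂ : q ≤ p₂) :
    IsMOP (restrictRel r (p₂.val.1 ∩ p₁.val.2))
      {d : (p₂.val.1 ∩ p₁.val.2 : Set S) | (d : S) ∈ q.val.1}
      {d : (p₂.val.1 ∩ p₁.val.2 : Set S) | (d : S) ∈ q.val.2} := by
  constructor
  · ext d
    refine ⟨fun hd a ha => q.not_rel ha hd, fun hd => ?_⟩
    show (d : S) ∈ q.val.2
    rw [q.prop.1]
    intro x hx hxd
    obtain ⟨w, hwD, hwq, hwd⟩ := exists_mem_inter_fst_rel h h₂ hx d.2.2 hxd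
    exact hd ⟨w, hwD⟩ hwq hwd
  · ext d
    refine ⟨fun hd b hb => q.not_rel hd hb, fun hd => ?_⟩
    show (d : S) ∈ q.val.1
    rw [q.prop.2]
    intro z hz hdz
    obtain ⟨w, hwD, hwq, hdw⟩ := exists_mem_inter_snd_rel h h₁ d.2.1 hz hdz
    exact hd ⟨w, hwD⟩ hwq hdw

variable (p₁ p₂) in
def restrictIcc (h : IsFactSystem r ont inj) :
    Set.Icc p₁ p₂ → Pairs (restrictRel r (p₂.val.1 ∩ p₁.val.2)) := fun q =>
  ⟨({d | (d : S) ∈ (q : Pairs r).val.1}, {d | (d : S) ∈ (q : Pairs r).val.2}),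
    isMOP_restrict h q.2.1 q.2.2⟩

lemma restrictIcc_le_iff (h : IsFactSystem r ont inj) (q q' : Set.Icc p₁ p₂) :
    restrictIcc p₁ p₂ h q ≤ restrictIcc p₁ p₂ h q' ↔ q ≤ q' := by
  refine ⟨fun hle x hx => ?_, fun hle d hd => hle hd⟩
  rw [(q' : Pairs r).prop.2]
  intro z hz hxz
  obtain ⟨w, hwD, hwq, hwz⟩ :=
    exists_mem_inter_fst_rel h q.2.2 hx (Pairs.snd_subset_of_le q'.2.1 hz) hxz
  exact (q' : Pairs r).not_rel (hle (a := ⟨w, hwD⟩) hwq) hz hwz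

lemma restrictIcc_surjective (h : IsFactSystem r ont inj) (h12 : p₁ ≤ p₂) :
    Function.Surjective (restrictIcc p₁ p₂ h) := by
  intro P
  set W := p₁.val.1 ∪ Subtype.val '' P.val.1
  have hW : W ⊆ p₂.val.1 :=
    Set.union_subset h12 (Set.image_subset_iff.2 fun d _ => d.2.1)
  refine ⟨⟨Pairs.ofSet r W, Pairs.le_ofSet Set.subset_union_left, Pairs.ofSet_le hW⟩,
    Pairs.ext_fst (Set.ext fun d => ⟨fun hd => ?_, fun hd => ?_⟩)⟩
  · show d ∈ P.val.1
    rw [P.prop.2]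
    refine fun e he => hd e ?_
    rintro x (hx | ⟨a, ha, rfl⟩)
    · exact p₁.not_rel hx e.2.2
    · exact P.not_rel ha he
  · exact Pairs.subset_ofSet_fst W (Or.inr ⟨d, hd, rfl⟩)

end Interval

/-- Theorem 4.3: an interval `[(X₁,Y₁), (X₂,Y₂)]` of `Pairs(→)` is isomorphic to the lattice
of maximal orthogonal pairs of the restriction of `→` to `X₂ ∩ Y₁`, which is again a
two-acyclic factorization system. -/
theorem interval_fact_system (S : Type u) (r ont inj : S → S → Prop)
    (h : IsTwoAcyclicFS r ont inj) (p₁ p₂ : Pairs r) (h12 : p₁ ≤ p₂) :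
    IsTwoAcyclicFS (restrictRel r (p₂.val.1 ∩ p₁.val.2))
      (Onto (restrictRel r (p₂.val.1 ∩ p₁.val.2)))
      (Into (restrictRel r (p₂.val.1 ∩ p₁.val.2))) ∧
    ∃ e : (Set.Icc p₁ p₂) ≃o Pairs (restrictRel r (p₂.val.1 ∩ p₁.val.2)),
      ∀ q : Set.Icc p₁ p₂,
        (e q).val.1 = {d : (p₂.val.1 ∩ p₁.val.2 : Set S) | (d : S) ∈ (q : Pairs r).val.1} ∧
        (e q).val.2 = {d : (p₂.val.1 ∩ p₁.val.2 : Set S) | (d : S) ∈ (q : Pairs r).val.2} := by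
  have hfs := h.toIsFactSystem
  refine ⟨h.restrict (isFactClosed_inter p₁ p₂ hfs), ?_⟩
  let e := OrderEmbedding.ofMapLEIff (restrictIcc p₁ p₂ hfs) (restrictIcc_le_iff hfs)
  exact ⟨OrderIso.ofSurjective e (restrictIcc_surjective hfs h12), fun _ => ⟨rfl, rfl⟩⟩

end SDL
end
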